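/- arXiv:math/0307171 — 6 statements merged into one kernel-verified Lean document; each statement's English description precedes it below -/
import Mathlib

section
/- Every set of 3 mutually orthogonal positive roots of D_4 is contained in a unique set of 4 mutually orthogonal positive roots of D_4. -/
noncomputable def E {n : ℕ} (i : Fin n) : Fin n → ℝ := Pi.single i 1

def dot {n : ℕ} (x y : Fin n → ℝ) : ℝ := ∑ i, x i * y i

/-- The 12 positive roots of `D_4`. -/
def D4 : Set (Fin 4 → ℝ) :=
  {v | ∃ i j : Fin 4, i < j ∧ (v = E i + E j ∨ v = E i - E j)}

def vecZ : Fin 12 → Fin 4 → ℤ :=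
  ![![1,1,0,0], ![1,-1,0,0], ![1,0,1,0], ![1,0,-1,0], ![1,0,0,1], ![1,0,0,-1],
    ![0,1,1,0], ![0,1,-1,0], ![0,1,0,1], ![0,1,0,-1], ![0,0,1,1], ![0,0,1,-1]]

noncomputable def vecR (n : Fin 12) : Fin 4 → ℝ := fun k => (vecZ n k : ℝ)

def z (m n : Fin 12) : ℤ := ∑ k, vecZ m k * vecZ n k

lemma dot_vecR (m n : Fin 12) : dot (vecR m) (vecR n) = (z m n : ℝ) := by
  simp [dot, vecR, z]

lemma dot_comm {n : ℕ} (x y : Fin n → ℝ) : dot x y = dot y x := by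
  simp [dot, mul_comm]

lemma z_self : ∀ a : Fin 12, z a a = 2 := by decide

lemma z_comm (m n : Fin 12) : z m n = z n m := by simp [z, mul_comm]

lemma vecZ_inj : ∀ m n : Fin 12, vecZ m = vecZ n → m = n := by decide

lemma vecR_inj {m n : Fin 12} (h : vecR m = vecR n) : m = n := by
  refine vecZ_inj m n (funext fun k => ?_)
  have := congrFun h k
  simp only [vecR] at this
  exact_mod_cast this

set_option synthInstance.maxSize 2048 in
set_option synthInstance.maxHeartbeats 400000 in
set_option maxRecDepth 10000 in
lemma key : ∀ a b c : Fin 12, a ≠ b → a ≠ c → b ≠ c →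
    z a b = 0 → z a c = 0 → z b c = 0 →
    ∃ d : Fin 12, z a d = 0 ∧ z b d = 0 ∧ z c d = 0 ∧
      ∀ x : Fin 12, z a x = 0 → z b x = 0 → z c x = 0 → x = d := by decide

lemma vecR_add (i j : Fin 4) (n : Fin 12)
    (h : ∀ k, vecZ n k = (if k = i then 1 else 0) + (if k = j then 1 else 0)) :
    E i + E j = vecR n := by
  funext k
  simp [E, vecR, Pi.single_apply, h k]

lemma vecR_sub (i j : Fin 4) (n : Fin 12)
    (h : ∀ k, vecZ n k = (if k = i then 1 else 0) - (if k = j then 1 else 0)) :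
    E i - E j = vecR n := by
  funext k
  simp [E, vecR, Pi.single_apply, h k]

lemma mem_D4_iff (v : Fin 4 → ℝ) : v ∈ D4 ↔ ∃ n : Fin 12, v = vecR n := by
  constructor
  · rintro ⟨i, j, hij, h | h⟩ <;> subst h <;> fin_cases i <;> fin_cases j <;>
      first
      | exact absurd hij (by decide)
      | exact ⟨0, vecR_add _ _ _ (by decide)⟩
      | exact ⟨1, vecR_sub _ _ _ (by decide)⟩
      | exact ⟨2, vecR_add _ _ _ (by decide)⟩
      | exact ⟨3, vecR_sub _ _ _ (by decide)⟩
      | exact ⟨4, vecR_add _ _ _ (by decide)⟩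
      | exact ⟨5, vecR_sub _ _ _ (by decide)⟩
      | exact ⟨6, vecR_add _ _ _ (by decide)⟩
      | exact ⟨7, vecR_sub _ _ _ (by decide)⟩
      | exact ⟨8, vecR_add _ _ _ (by decide)⟩
      | exact ⟨9, vecR_sub _ _ _ (by decide)⟩
      | exact ⟨10, vecR_add _ _ _ (by decide)⟩
      | exact ⟨11, vecR_sub _ _ _ (by decide)⟩
  · rintro ⟨n, rfl⟩
    fin_cases n
    · exact ⟨0, 1, by decide, Or.inl (vecR_add _ _ _ (by decide)).symm⟩
    · exact ⟨0, 1, by decide, Or.inr (vecR_sub _ _ _ (by decide)).symm⟩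
    · exact ⟨0, 2, by decide, Or.inl (vecR_add _ _ _ (by decide)).symm⟩
    · exact ⟨0, 2, by decide, Or.inr (vecR_sub _ _ _ (by decide)).symm⟩
    · exact ⟨0, 3, by decide, Or.inl (vecR_add _ _ _ (by decide)).symm⟩
    · exact ⟨0, 3, by decide, Or.inr (vecR_sub _ _ _ (by decide)).symm⟩
    · exact ⟨1, 2, by decide, Or.inl (vecR_add _ _ _ (by decide)).symm⟩
    · exact ⟨1, 2, by decide, Or.inr (vecR_sub _ _ _ (by decide)).symm⟩
    · exact ⟨1, 3, by decide, Or.inl (vecR_add _ _ _ (by decide)).symm⟩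
    · exact ⟨1, 3, by decide, Or.inr (vecR_sub _ _ _ (by decide)).symm⟩
    · exact ⟨2, 3, by decide, Or.inl (vecR_add _ _ _ (by decide)).symm⟩
    · exact ⟨2, 3, by decide, Or.inr (vecR_sub _ _ _ (by decide)).symm⟩

lemma dot_zero_iff (m n : Fin 12) : dot (vecR m) (vecR n) = 0 ↔ z m n = 0 := by
  rw [dot_vecR]; exact_mod_cast Int.cast_eq_zero

/-- Every triple of mutually orthogonal positive roots of `D_4` is contained in a
unique quadruple of mutually orthogonal positive roots. -/
theorem D4_triple_in_unique_quadruple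
    (t : Set (Fin 4 → ℝ)) (ht : t ⊆ D4) (hcard : t.ncard = 3)
    (horth : t.Pairwise (fun x y => dot x y = 0)) :
    ∃! q : Set (Fin 4 → ℝ), q ⊆ D4 ∧ q.ncard = 4 ∧
      q.Pairwise (fun x y => dot x y = 0) ∧ t ⊆ q := by
  obtain ⟨u, v, w, huv, huw, hvw, rfl⟩ := Set.ncard_eq_three.mp hcard
  obtain ⟨a, rfl⟩ := (mem_D4_iff u).mp (ht (by simp))
  obtain ⟨b, rfl⟩ := (mem_D4_iff v).mp (ht (by simp))
  obtain ⟨c, rfl⟩ := (mem_D4_iff w).mp (ht (by simp))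
  have hab : a ≠ b := fun h => huv (by rw [h])
  have hac : a ≠ c := fun h => huw (by rw [h])
  have hbc : b ≠ c := fun h => hvw (by rw [h])
  have zab : z a b = 0 := (dot_zero_iff a b).mp (horth (by simp) (by simp) huv)
  have zac : z a c = 0 := (dot_zero_iff a c).mp (horth (by simp) (by simp) huw)
  have zbc : z b c = 0 := (dot_zero_iff b c).mp (horth (by simp) (by simp) hvw)
  obtain ⟨d, zad, zbd, zcd, huniq⟩ := key a b c hab hac hbc zab zac zbc
  have hda : d ≠ a := fun h => by subst h; rw [z_self] at zad; exact two_ne_zero zad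
  have hdb : d ≠ b := fun h => by subst h; rw [z_self] at zbd; exact two_ne_zero zbd
  have hdc : d ≠ c := fun h => by subst h; rw [z_self] at zcd; exact two_ne_zero zcd
  set t : Set (Fin 4 → ℝ) := {vecR a, vecR b, vecR c} with ht_def
  have hd_not_mem : vecR d ∉ t := by
    rintro (h | h | h) <;>
      [exact hda (vecR_inj h); exact hdb (vecR_inj h); exact hdc (vecR_inj h)]
  have hsym : Symmetric (fun x y : Fin 4 → ℝ => dot x y = 0) :=
    fun x y h => (dot_comm y x).trans h
  refine ⟨insert (vecR d) t, ⟨?_, ?_, ?_, Set.subset_insert _ _⟩, ?_⟩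
  · rintro x (rfl | hx)
    · exact (mem_D4_iff _).mpr ⟨d, rfl⟩
    · exact ht hx
  · rw [Set.ncard_insert_of_notMem hd_not_mem (Set.toFinite t), hcard]
  · haveI : Std.Symm (fun x y : Fin 4 → ℝ => dot x y = 0) := ⟨fun x y h => hsym h⟩
    rw [Set.pairwise_insert_of_symm]
    refine ⟨horth, ?_⟩
    rintro x (rfl | rfl | rfl) _
    · exact (dot_zero_iff d a).mpr ((z_comm d a).trans zad)
    · exact (dot_zero_iff d b).mpr ((z_comm d b).trans zbd)
    · exact (dot_zero_iff d c).mpr ((z_comm d c).trans zcd)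
  · rintro q ⟨hqD4, hq4, hqorth, htq⟩
    have hdiff : (q \ t).ncard = 1 := by
      rw [Set.ncard_diff htq (Set.toFinite _), hq4, hcard]
    obtain ⟨x, hx⟩ := Set.ncard_eq_one.mp hdiff
    have hxq : x ∈ q := by
      have : x ∈ q \ t := by rw [hx]; exact rfl
      exact this.1
    have hxt : x ∉ t := by
      have : x ∈ q \ t := by rw [hx]; exact rfl
      exact this.2
    obtain ⟨m, rfl⟩ := (mem_D4_iff x).mp (hqD4 hxq)
    have hza : z a m = 0 := by
      refine (dot_zero_iff a m).mp (hqorth (htq (by exact Set.mem_insert _ _)) hxq fun h => hxt ?_)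
      rw [← h]; exact Or.inl rfl
    have hzb : z b m = 0 := by
      refine (dot_zero_iff b m).mp (hqorth (htq (Set.mem_insert_of_mem _ (Set.mem_insert _ _))) hxq fun h => hxt ?_)
      rw [← h]; exact Or.inr (Or.inl rfl)
    have hzc : z c m = 0 := by
      refine (dot_zero_iff c m).mp (hqorth (htq (Set.mem_insert_of_mem _ (Set.mem_insert_of_mem _ rfl))) hxq fun h => hxt ?_)
      rw [← h]; exact Or.inr (Or.inr rfl)
    have hmd : m = d := huniq m hza hzb hzc
    subst hmd
    rw [← Set.union_diff_cancel htq, hx, Set.union_comm]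
    rfl
end

section
/- Let P = {x ∈ ℝ^n : -1 ≤ x_i ± x_j ≤ 1 for all 1 ≤ i < j ≤ n} with n ≥ 2. Then every extreme point of P is either ±e_i for some i, or v(S) = (1/2)(∑_{i∈S} e_i − ∑_{i∉S} e_i) for some S ⊆ {1,…,n}. -/
/-- The Voronoi polytope of the root lattice `D_n`. -/
def PV (n : ℕ) : Set (Fin n → ℝ) :=
  {x | ∀ i j : Fin n, i < j →
    (-1 ≤ x i + x j ∧ x i + x j ≤ 1) ∧ (-1 ≤ x i - x j ∧ x i - x j ≤ 1)}

/-- The vertex `v(S)`. -/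
noncomputable def vS {n : ℕ} (S : Finset (Fin n)) : Fin n → ℝ :=
  fun i => if i ∈ S then 1/2 else -1/2

lemma absPV {n : ℕ} {x : Fin n → ℝ} (hx : x ∈ PV n) :
    ∀ i j : Fin n, i ≠ j → |x i| + |x j| ≤ 1 := by
  intro i j hij
  rcases hij.lt_or_gt with h | h
  · obtain ⟨⟨a, b⟩, c, d⟩ := hx i j h
    rcases abs_cases (x i) with ⟨e, _⟩ | ⟨e, _⟩ <;>
      rcases abs_cases (x j) with ⟨f, _⟩ | ⟨f, _⟩ <;> rw [e, f] <;> linarith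
  · obtain ⟨⟨a, b⟩, c, d⟩ := hx j i h
    rcases abs_cases (x i) with ⟨e, _⟩ | ⟨e, _⟩ <;>
      rcases abs_cases (x j) with ⟨f, _⟩ | ⟨f, _⟩ <;> rw [e, f] <;> linarith

lemma memPV {n : ℕ} {x : Fin n → ℝ} (h : ∀ i j : Fin n, i ≠ j → |x i| + |x j| ≤ 1) :
    x ∈ PV n := by
  intro i j hij
  have := h i j hij.ne
  have h1 := le_abs_self (x i); have h2 := le_abs_self (x j)
  have h3 := neg_abs_le (x i); have h4 := neg_abs_le (x j)
  exact ⟨⟨by linarith, by linarith⟩, by linarith, by linarith⟩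

lemma not_perturb {n : ℕ} {x d : Fin n → ℝ} (hx : x ∈ Set.extremePoints ℝ (PV n))
    (h1 : x + d ∈ PV n) (h2 : x - d ∈ PV n) : d = 0 := by
  have hmem : x ∈ openSegment ℝ (x - d) (x + d) := by
    refine ⟨1/2, 1/2, by norm_num, by norm_num, by norm_num, ?_⟩
    funext m
    simp [Pi.smul_apply, smul_eq_mul]
    ring
  have h := hx.2 h1 h2 (by rw [openSegment_symm]; exact hmem)
  funext m
  have hm := congrFun h m
  have : x m + d m = x m := hm
  simpa using by linarith

lemma sign_abs_helper {a ε : ℝ} (h0 : 0 ≤ ε) (h1 : ε ≤ |a|) :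
    |a + ε * Real.sign a| = |a| + ε ∧ |a - ε * Real.sign a| = |a| - ε := by
  rcases lt_trichotomy a 0 with h | h | h
  · rw [Real.sign_of_neg h, abs_of_neg h] at *
    constructor
    · rw [show a + ε * (-1) = -(-a + ε) by ring, abs_neg, abs_of_nonneg (by linarith)]
    · rw [show a - ε * (-1) = -(-a - ε) by ring, abs_neg, abs_of_nonneg (by linarith)]
  · simp [h] at h1 ⊢
    constructor <;> linarith
  · rw [Real.sign_of_pos h, abs_of_pos h] at *
    constructor
    · rw [abs_of_nonneg (by linarith)]; ring
    · rw [abs_of_nonneg (by linarith)]; ring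

lemma single_perturb {n : ℕ} {x : Fin n → ℝ} (hx : x ∈ Set.extremePoints ℝ (PV n))
    (k : Fin n) (δ : ℝ) (hδ : 0 < δ)
    (hIn : ∀ c : ℝ, |c| ≤ δ → x + Pi.single k c ∈ PV n) : False := by
  have h1 := hIn δ (by rw [abs_of_pos hδ])
  have h2 : x - Pi.single k δ ∈ PV n := by
    have h2' := hIn (-δ) (by rw [abs_neg, abs_of_pos hδ])
    have he : x - Pi.single k δ = x + Pi.single k (-δ) := by
      funext m
      rcases eq_or_ne m k with rfl | hm
      · simp only [Pi.sub_apply, Pi.add_apply, Pi.single_eq_same]; ring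
      · simp [Pi.single_eq_of_ne hm]
    rw [he]; exact h2'
  have h0 := not_perturb hx h1 h2
  have := congrFun h0 k
  simp [Pi.single_eq_same] at this
  linarith

/-- Every extreme point of the Voronoi polytope of `D_n` is one of the points
`±e_i` or `v(S)`. -/
theorem PV_extreme_points_classified (n : ℕ) (hn : 2 ≤ n)
    (x : Fin n → ℝ) (hx : x ∈ Set.extremePoints ℝ (PV n)) :
    (∃ i : Fin n, x = E i ∨ x = -E i) ∨ ∃ S : Finset (Fin n), x = vS S := by
  have hxP : x ∈ PV n := hx.1
  have habs := absPV hxP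
  have hnt : Nontrivial (Fin n) := Fin.nontrivial_iff_two_le.mpr hn
  by_cases h1 : ∃ k, 1/2 < |x k|
  · -- some coordinate exceeds 1/2 : x must be ± e_k
    obtain ⟨k, hk⟩ := h1
    have hsmall : ∀ m, m ≠ k → |x m| ≤ 1 - |x k| := by
      intro m hm
      have := habs m k hm
      linarith
    have hk1 : |x k| ≤ 1 := by
      obtain ⟨m, hm⟩ := exists_ne k
      have h := hsmall m hm
      have := abs_nonneg (x m)
      linarith
    by_cases h2 : ∀ m, m ≠ k → x m = 0
    · -- x = ± e_k
      have hxk1 : |x k| = 1 := by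
        by_contra hne
        have hlt : |x k| < 1 := lt_of_le_of_ne hk1 hne
        obtain ⟨δ, hδdef⟩ : ∃ δ : ℝ, δ = 1 - |x k| := ⟨_, rfl⟩
        have hIn : ∀ c : ℝ, |c| ≤ δ → x + Pi.single k c ∈ PV n := by
          intro c hc
          apply memPV
          intro i j hij
          have val : ∀ m, |(x + Pi.single k c : Fin n → ℝ) m| ≤ (if m = k then 1 else 0 : ℝ) := by
            intro m
            rcases eq_or_ne m k with rfl | hm
            · simp only [Pi.add_apply, Pi.single_eq_same, if_pos]
              calc |x m + c| ≤ |x m| + |c| := abs_add_le _ _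
                _ ≤ 1 := by rw [hδdef] at hc; linarith
            · simp only [Pi.add_apply, Pi.single_eq_of_ne hm, add_zero, if_neg hm,
                h2 m hm, abs_zero, le_refl]
          have vi := val i; have vj := val j
          have := abs_nonneg ((x + Pi.single k c : Fin n → ℝ) i)
          have := abs_nonneg ((x + Pi.single k c : Fin n → ℝ) j)
          rcases eq_or_ne i k with rfl | hik
          · rw [if_pos rfl] at vi; rw [if_neg (hij.symm)] at vj; linarith
          · rw [if_neg hik] at vi
            rcases eq_or_ne j k with rfl | hjk
            · rw [if_pos rfl] at vj; linarith
            · rw [if_neg hjk] at vj; linarith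
        exact single_perturb hx k δ (by rw [hδdef]; linarith) hIn
      left
      rcases (abs_eq (by norm_num : (0:ℝ) ≤ 1)).mp hxk1 with h | h
      · exact ⟨k, Or.inl (by
          funext m
          rcases eq_or_ne m k with rfl | hm
          · simp [E, Pi.single_eq_same, h]
          · simp [E, Pi.single_eq_of_ne hm, h2 m hm])⟩
      · exact ⟨k, Or.inr (by
          funext m
          rcases eq_or_ne m k with rfl | hm
          · simp [E, Pi.single_eq_same, h]
          · simp [E, Pi.single_eq_of_ne hm, h2 m hm])⟩
    · -- impossible : build a two-coordinate perturbation
      exfalso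
      push_neg at h2
      obtain ⟨j, hjk, hj0⟩ := h2
      have hjpos : 0 < |x j| := abs_pos.mpr hj0
      have hklt1 : |x k| < 1 := by have := hsmall j hjk; linarith
      have hk0 : x k ≠ 0 := by
        intro h; rw [h, abs_zero] at hk; linarith
      set μ := Finset.univ.inf' (⟨k, Finset.mem_univ k⟩ : (Finset.univ : Finset (Fin n)).Nonempty)
        (fun m => if x m = 0 ∨ m = k then 1 else |x m|) with hμ
      have hμpos : 0 < μ := by
        rw [hμ]; refine (Finset.lt_inf'_iff _).2 ?_
        intro m _
        split
        · norm_num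
        · next h => push_neg at h; exact abs_pos.mpr h.1
      have hμle : ∀ m, m ≠ k → x m ≠ 0 → μ ≤ |x m| := by
        intro m hm h0
        have h := Finset.inf'_le (b := m)
          (f := fun m => if x m = 0 ∨ m = k then 1 else |x m|) (Finset.mem_univ m)
        rw [if_neg (by push_neg; exact ⟨h0, hm⟩)] at h
        exact h
      set ε := min (|x k| - 1/2) (min (1 - |x k|) μ) with hε
      have hεpos : 0 < ε := lt_min (by linarith) (lt_min (by linarith) hμpos)
      have hε1 : ε ≤ |x k| - 1/2 := min_le_left _ _
      have hε2 : ε ≤ 1 - |x k| := le_trans (min_le_right _ _) (min_le_left _ _)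
      have hε3 : ∀ m, m ≠ k → x m ≠ 0 → ε ≤ |x m| := fun m hm h0 =>
        le_trans (le_trans (min_le_right _ _) (min_le_right _ _)) (hμle m hm h0)
      set d : Fin n → ℝ := fun m => if m = k then ε * Real.sign (x k)
        else -(ε * Real.sign (x m)) with hd
      have keyk := sign_abs_helper hεpos.le (by linarith : ε ≤ |x k|)
      -- x + d ∈ PV n
      have hA : x + d ∈ PV n := by
        apply memPV
        intro i j hij
        have boundm : ∀ m, m ≠ k → |(x + d) m| ≤ |x m| := by
          intro m hm
          simp only [Pi.add_apply, hd, if_neg hm]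
          rcases eq_or_ne (x m) 0 with h0 | h0
          · simp [h0]
          · have key := sign_abs_helper hεpos.le (hε3 m hm h0)
            rw [show x m + -(ε * Real.sign (x m)) = x m - ε * Real.sign (x m) by ring,
              key.2]
            linarith [hεpos]
        have boundk : |(x + d) k| = |x k| + ε := by
          simp only [Pi.add_apply, hd, if_pos rfl]
          exact keyk.1
        have pairk : ∀ m, m ≠ k → |(x + d) k| + |(x + d) m| ≤ 1 := by
          intro m hm
          rw [boundk]
          rcases eq_or_ne (x m) 0 with h0 | h0
          · have : |(x + d) m| = 0 := by
              simp [hd, Pi.add_apply, if_neg hm, h0]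
            rw [this]; linarith
          · have key := sign_abs_helper hεpos.le (hε3 m hm h0)
            have : |(x + d) m| = |x m| - ε := by
              simp only [Pi.add_apply, hd, if_neg hm]
              rw [show x m + -(ε * Real.sign (x m)) = x m - ε * Real.sign (x m) by ring]
              exact key.2
            rw [this]
            have := habs k m (Ne.symm hm)
            linarith
        rcases eq_or_ne i k with rfl | hik
        · exact pairk j hij.symm
        · rcases eq_or_ne j k with rfl | hjk
          · have := pairk i hik; linarith
          · have := boundm i hik; have := boundm j hjk
            have := habs i j hij
            linarith
      -- x - d ∈ PV n
      have hB : x - d ∈ PV n := by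
        apply memPV
        intro i j hij
        have boundm : ∀ m, m ≠ k → |(x - d) m| ≤ 1/2 := by
          intro m hm
          simp only [Pi.sub_apply, hd, if_neg hm]
          rcases eq_or_ne (x m) 0 with h0 | h0
          · simp [h0]
          · have key := sign_abs_helper hεpos.le (hε3 m hm h0)
            rw [show x m - -(ε * Real.sign (x m)) = x m + ε * Real.sign (x m) by ring,
              key.1]
            have := hsmall m hm
            linarith
        have boundk : |(x - d) k| = |x k| - ε := by
          simp only [Pi.sub_apply, hd, if_pos rfl]
          exact keyk.2
        have pairk : ∀ m, m ≠ k → |(x - d) k| + |(x - d) m| ≤ 1 := by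
          intro m hm
          rw [boundk]
          rcases eq_or_ne (x m) 0 with h0 | h0
          · have : |(x - d) m| = 0 := by
              simp [hd, Pi.sub_apply, if_neg hm, h0]
            rw [this]; linarith
          · have key := sign_abs_helper hεpos.le (hε3 m hm h0)
            have : |(x - d) m| = |x m| + ε := by
              simp only [Pi.sub_apply, hd, if_neg hm]
              rw [show x m - -(ε * Real.sign (x m)) = x m + ε * Real.sign (x m) by ring]
              exact key.1
            rw [this]
            have := habs k m (Ne.symm hm)
            linarith
        rcases eq_or_ne i k with rfl | hik
        · exact pairk j hij.symm
        · rcases eq_or_ne j k with rfl | hjk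
          · have := pairk i hik; linarith
          · have := boundm i hik; have := boundm j hjk
            linarith
      have h0 := not_perturb hx hA hB
      have := congrFun h0 k
      simp only [hd, if_pos rfl, Pi.zero_apply] at this
      exact (mul_ne_zero hεpos.ne' (fun h => hk0 (Real.sign_eq_zero_iff.mp h))) this
  · -- all coordinates at most 1/2
    push_neg at h1
    by_cases h3 : ∀ m, |x m| = 1/2
    · right
      refine ⟨Finset.univ.filter (fun i => 0 < x i), ?_⟩
      funext i
      rcases (abs_eq (by norm_num : (0:ℝ) ≤ 1/2)).mp (h3 i) with h | h
      · simp only [vS, Finset.mem_filter, Finset.mem_univ, true_and]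
        rw [if_pos (by rw [h]; norm_num)]
        exact h
      · simp only [vS, Finset.mem_filter, Finset.mem_univ, true_and]
        rw [if_neg (by rw [h]; norm_num)]
        rw [h]; norm_num
    · exfalso
      push_neg at h3
      obtain ⟨k, hk⟩ := h3
      have hklt : |x k| < 1/2 := lt_of_le_of_ne (h1 k) hk
      obtain ⟨δ, hδdef⟩ : ∃ δ : ℝ, δ = 1/2 - |x k| := ⟨_, rfl⟩
      have hIn : ∀ c : ℝ, |c| ≤ δ → x + Pi.single k c ∈ PV n := by
        intro c hc
        apply memPV
        intro i j hij
        have val : ∀ m, |(x + Pi.single k c : Fin n → ℝ) m| ≤ 1/2 := by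
          intro m
          rcases eq_or_ne m k with rfl | hm
          · simp only [Pi.add_apply, Pi.single_eq_same]
            calc |x m + c| ≤ |x m| + |c| := abs_add_le _ _
              _ ≤ 1/2 := by rw [hδdef] at hc; linarith
          · simp only [Pi.add_apply, Pi.single_eq_of_ne hm, add_zero]
            exact h1 m
        linarith [val i, val j]
      exact single_perturb hx k δ (by rw [hδdef]; linarith) hIn
end

section
/- Let z ∈ ℝ^n (n ≥ 3) be a vector such that for every triple of indices i < j < k, z is orthogonal to at least one of the three vectors e_i - e_j, e_j - e_k, e_i - e_k. Then z has at most two distinct coordinate values; equivalently, there exist a set S ⊆ {1,…,n} and real numbers a, b such that z = a·∑_{i∈S} e_i + b·∑_{i∉S} e_i. -/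
lemma dotE {n : ℕ} (z : Fin n → ℝ) (i j : Fin n) :
    dot z (E i - E j) = z i - z j := by
  simp [dot, E, Pi.sub_apply, mul_sub, Finset.sum_sub_distrib, Pi.single_apply,
    mul_ite, Finset.sum_ite_eq']

/-- If `z` is orthogonal to at least one vector of each 3-belt
`(e_i - e_j, e_j - e_k, e_i - e_k)` (type (a)), then `z` takes at most two distinct
coordinate values: `z = a·e(S) + b·e(S̄)` for some `S` and reals `a`, `b`. -/
theorem two_values_of_belt_orthogonality (n : ℕ) (hn : 3 ≤ n) (z : Fin n → ℝ)
    (h : ∀ i j k : Fin n, i < j → j < k →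
      dot z (E i - E j) = 0 ∨ dot z (E j - E k) = 0 ∨ dot z (E i - E k) = 0) :
    ∃ (S : Finset (Fin n)) (a b : ℝ),
      z = fun i => if i ∈ S then a else b := by
  have hd : ∀ i j : Fin n, dot z (E i - E j) = 0 ↔ z i = z j := by
    intro i j; rw [dotE]; exact sub_eq_zero
  have hi0 : (0 : ℕ) < n := by omega
  set i0 : Fin n := ⟨0, hi0⟩ with hi0def
  by_cases hex : ∃ i, z i ≠ z i0
  · obtain ⟨j, hj⟩ := hex
    refine ⟨Finset.univ.filter (fun i => z i = z i0), z i0, z j, ?_⟩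
    funext i
    simp only [Finset.mem_filter, Finset.mem_univ, true_and]
    split_ifs with hi
    · exact hi
    · by_cases hij : i = j
      · rw [hij]
      · have hnei : i ≠ i0 := by rintro rfl; exact hi rfl
        have hnej : j ≠ i0 := by rintro rfl; exact hj rfl
        have hi0i : i0 < i := by
          have : i.val ≠ 0 := fun hv => hnei (Fin.ext (by simp [hv, hi0def]))
          simp only [Fin.lt_def, hi0def]; omega
        have hi0j : i0 < j := by
          have : j.val ≠ 0 := fun hv => hnej (Fin.ext (by simp [hv, hi0def]))
          simp only [Fin.lt_def, hi0def]; omega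
        rcases lt_trichotomy i j with hlt | heq | hgt
        · rcases h i0 i j hi0i hlt with H | H | H
          · exact absurd ((hd _ _).1 H).symm hi
          · exact (hd _ _).1 H
          · exact absurd ((hd _ _).1 H).symm hj
        · exact absurd heq hij
        · rcases h i0 j i hi0j hgt with H | H | H
          · exact absurd ((hd _ _).1 H).symm hj
          · exact ((hd _ _).1 H).symm
          · exact absurd ((hd _ _).1 H).symm hi
  · push_neg at hex
    exact ⟨Finset.univ, z i0, 0, funext fun i => by simp [hex i]⟩
end

section
/- Conversely, for n ≥ 3, every vector z of the form e_i (for some i ∈ {1,…,n}) or ∑_{i∈S} e_i − ∑_{i∉S} e_i (for some S ⊆ {1,…,n}) is orthogonal to at least one vector of each triple (e_i - e_j, e_j - e_k, e_i - e_k) and of each triple (e_i + e_j, e_j + e_k, e_i - e_k), for all pairwise distinct i, j, k. -/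
/-- The vector `e(S) - e(S̄)`. -/
noncomputable def wS {n : ℕ} (S : Finset (Fin n)) : Fin n → ℝ :=
  fun i => if i ∈ S then 1 else -1

lemma dot_E {n : ℕ} (z : Fin n → ℝ) (i : Fin n) : dot z (E i) = z i := by
  simp [dot, E, Pi.single_apply, mul_ite, Finset.sum_ite_eq']

lemma dot_sub {n : ℕ} (z x y : Fin n → ℝ) : dot z (x - y) = dot z x - dot z y := by
  simp [dot, mul_sub, Finset.sum_sub_distrib]

lemma dot_add {n : ℕ} (z x y : Fin n → ℝ) : dot z (x + y) = dot z x + dot z y := by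
  simp [dot, mul_add, Finset.sum_add_distrib]

/-- Every vector of the form `e_i` or `e(S) - e(S̄)` is orthogonal to at least one
facet vector of each 3-belt of `P_V(D_n)`. -/
theorem edge_directions_orthogonal_to_belts (n : ℕ) (hn : 3 ≤ n)
    (z : Fin n → ℝ)
    (hz : (∃ i : Fin n, z = E i) ∨ (∃ S : Finset (Fin n), z = wS S)) :
    ∀ i j k : Fin n, i ≠ j → j ≠ k → i ≠ k →
      (dot z (E i - E j) = 0 ∨ dot z (E j - E k) = 0 ∨ dot z (E i - E k) = 0) ∧
      (dot z (E i + E j) = 0 ∨ dot z (E j + E k) = 0 ∨ dot z (E i - E k) = 0) := by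
  intro i j k hij hjk hik
  simp only [dot_sub, dot_add, dot_E]
  rcases hz with ⟨m, rfl⟩ | ⟨S, rfl⟩
  · simp only [E, Pi.single_apply]
    rcases eq_or_ne i m with hi | hi <;> rcases eq_or_ne j m with hj | hj <;>
      rcases eq_or_ne k m with hk | hk <;> simp_all
  · simp only [wS]
    rcases Finset.decidableMem i S with hi | hi <;>
      rcases Finset.decidableMem j S with hj | hj <;>
        rcases Finset.decidableMem k S with hk | hk <;> simp_all
end

section
/- For the Voronoi polytope of D_n (n ≥ 3), the vertex e_i is adjacent to the vertex v(S) = (1/2)(∑_{j∈S} e_j − ∑_{j∉S} e_j) only if i ∈ S; concretely, the midpoint of the segment from e_i to v(S) with i ∉ S lies on the segment joining two other vertices of P, so the segment [e_i, v(S)] is not an edge when i ∉ S. -/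
/-- The set of vertices of the Voronoi polytope of `D_n`. -/
noncomputable def PVvertices (n : ℕ) : Set (Fin n → ℝ) :=
  {x | (∃ i : Fin n, x = E i ∨ x = -E i) ∨ ∃ S : Finset (Fin n), x = vS S}

/-- If `i ∉ S`, then the midpoint of the segment from `e_i` to `v(S)` lies on the open
segment joining two other vertices of `P_V(D_n)`; hence `[e_i, v(S)]` is not an edge,
i.e. `e_i` is adjacent to `v(S)` only if `i ∈ S`. -/
theorem not_edge_of_not_mem (n : ℕ) (hn : 2 ≤ n) (i : Fin n)
    (S : Finset (Fin n)) (hi : i ∉ S) :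
    ∃ u w : Fin n → ℝ, u ∈ PVvertices n ∧ w ∈ PVvertices n ∧ u ≠ w ∧
      u ≠ E i ∧ u ≠ vS S ∧ w ≠ E i ∧ w ≠ vS S ∧
      (1/2 : ℝ) • (E i + vS S) ∈ openSegment ℝ u w := by
  have hnt : Nontrivial (Fin n) := Fin.nontrivial_iff_two_le.mpr hn
  set T : Finset (Fin n) := insert i S with hT
  refine ⟨vS T, vS Tᶜ, Or.inr ⟨T, rfl⟩, Or.inr ⟨Tᶜ, rfl⟩, ?_, ?_, ?_, ?_, ?_, ?_⟩
  · intro h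
    have := congrFun h i
    simp [vS, hT, Finset.mem_insert] at this
    norm_num at this
  · intro h
    have := congrFun h i
    simp [vS, E, hT] at this
  · intro h
    have := congrFun h i
    simp [vS, hT, hi] at this
    norm_num at this
  · intro h
    have := congrFun h i
    simp [vS, E, hT] at this
    norm_num at this
  · intro h
    rcases S.eq_empty_or_nonempty with hS | ⟨j, hj⟩
    · obtain ⟨j, hj⟩ := exists_ne i
      have := congrFun h j
      simp [vS, hT, hS, hj] at this
      norm_num at this
    · have hjT : j ∈ T := Finset.mem_insert_of_mem hj
      have := congrFun h j
      simp [vS, hjT, hj] at this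
      norm_num at this
  · refine ⟨3/4, 1/4, by norm_num, by norm_num, by norm_num, ?_⟩
    funext j
    by_cases hj : j ∈ T
    · have hji : j ∈ S ∨ j = i := by
        rcases Finset.mem_insert.mp hj with h1 | h1
        · exact Or.inr h1
        · exact Or.inl h1
      rcases hji with h1 | h1
      · have hne : j ≠ i := fun hc => hi (hc ▸ h1)
        simp [vS, E, hj, h1, hne, Pi.single_apply]
        norm_num
      · subst h1
        simp [vS, E, hj, hi, Pi.single_apply]
        norm_num
    · have h1 : j ∉ S := fun hc => hj (Finset.mem_insert_of_mem hc)
      have hne : j ≠ i := fun hc => hj (hc ▸ Finset.mem_insert_self i S)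
      simp [vS, E, hj, h1, hne, Pi.single_apply]
      norm_num
end

section
/- The number of sets of the form t_1 ∪ t_2 ∪ t_3, where t_1, t_2, t_3 are three pairwise disjoint triples of mutually orthogonal positive roots of D_4 such that no four roots of the union are mutually orthogonal, is exactly 64. -/
/-- A triple: a 3-element set of mutually orthogonal positive roots of `D_4`. -/
def IsTriple (t : Set (Fin 4 → ℝ)) : Prop :=
  t ⊆ D4 ∧ t.ncard = 3 ∧ t.Pairwise (fun x y => dot x y = 0)

/-- The 12 positive roots, arranged in three orthogonal quadruples. -/
noncomputable def rr : Fin 3 → Fin 4 → (Fin 4 → ℝ) :=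
  ![![E 0 + E 1, E 0 - E 1, E 2 + E 3, E 2 - E 3],
    ![E 0 + E 2, E 0 - E 2, E 1 + E 3, E 1 - E 3],
    ![E 0 + E 3, E 0 - E 3, E 1 + E 2, E 1 - E 2]]

/-- Integer coordinates of the roots. -/
def cc : Fin 3 → Fin 4 → Fin 4 → ℤ :=
  ![![![1, 1, 0, 0], ![1, -1, 0, 0], ![0, 0, 1, 1], ![0, 0, 1, -1]],
    ![![1, 0, 1, 0], ![1, 0, -1, 0], ![0, 1, 0, 1], ![0, 1, 0, -1]],
    ![![1, 0, 0, 1], ![1, 0, 0, -1], ![0, 1, 1, 0], ![0, 1, -1, 0]]]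

lemma rr_eq : ∀ k a, rr k a = fun m => ((cc k a m : ℤ) : ℝ) := by
  intro k a
  funext m
  fin_cases k <;> fin_cases a <;> fin_cases m <;>
    norm_num [rr, cc, E, Pi.single_apply, Fin.ext_iff] <;> decide

/-- The integer dot products of the roots. -/
def dd (k : Fin 3) (a : Fin 4) (k' : Fin 3) (b : Fin 4) : ℤ :=
  ∑ m, cc k a m * cc k' b m

lemma dot_rr (k k' : Fin 3) (a b : Fin 4) :
    dot (rr k a) (rr k' b) = (dd k a k' b : ℝ) := by
  rw [rr_eq, rr_eq]
  simp only [dot, dd]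
  push_cast
  rfl

lemma dd_diag : ∀ (k : Fin 3) (a : Fin 4) (k' : Fin 3) (b : Fin 4),
    dd k a k a = dd k a k' b → k = k' ∧ a = b := by decide

lemma rr_inj {k k' : Fin 3} {a b : Fin 4} (h : rr k a = rr k' b) : k = k' ∧ a = b := by
  have h1 : dot (rr k a) (rr k a) = dot (rr k a) (rr k' b) := by rw [h]
  rw [dot_rr, dot_rr] at h1
  exact dd_diag k a k' b (by exact_mod_cast h1)

lemma ddz : ∀ (k : Fin 3) (a : Fin 4) (k' : Fin 3) (b : Fin 4),
    dd k a k' b = 0 → k = k' ∧ a ≠ b := by decide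

lemma dsame : ∀ (k : Fin 3) (a b : Fin 4), a ≠ b → dd k a k b = 0 := by decide

lemma D4_eq : D4 = {v | ∃ k a, v = rr k a} := by
  ext v
  constructor
  · rintro ⟨i, j, hij, hv⟩
    rcases hv with rfl | rfl <;> fin_cases i <;> fin_cases j <;>
      first
      | exact absurd hij (by decide)
      | (refine ⟨0, 0, ?_⟩; simp [rr]; done)
      | (refine ⟨0, 1, ?_⟩; simp [rr]; done)
      | (refine ⟨0, 2, ?_⟩; simp [rr]; done)
      | (refine ⟨0, 3, ?_⟩; simp [rr]; done)
      | (refine ⟨1, 0, ?_⟩; simp [rr]; done)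
      | (refine ⟨1, 1, ?_⟩; simp [rr]; done)
      | (refine ⟨1, 2, ?_⟩; simp [rr]; done)
      | (refine ⟨1, 3, ?_⟩; simp [rr]; done)
      | (refine ⟨2, 0, ?_⟩; simp [rr]; done)
      | (refine ⟨2, 1, ?_⟩; simp [rr]; done)
      | (refine ⟨2, 2, ?_⟩; simp [rr]; done)
      | (refine ⟨2, 3, ?_⟩; simp [rr]; done)
  · rintro ⟨k, a, rfl⟩
    fin_cases k <;> fin_cases a <;>
      first
      | (refine ⟨0, 1, by decide, Or.inl ?_⟩; simp [rr]; done)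
      | (refine ⟨0, 1, by decide, Or.inr ?_⟩; simp [rr]; done)
      | (refine ⟨0, 2, by decide, Or.inl ?_⟩; simp [rr]; done)
      | (refine ⟨0, 2, by decide, Or.inr ?_⟩; simp [rr]; done)
      | (refine ⟨0, 3, by decide, Or.inl ?_⟩; simp [rr]; done)
      | (refine ⟨0, 3, by decide, Or.inr ?_⟩; simp [rr]; done)
      | (refine ⟨1, 2, by decide, Or.inl ?_⟩; simp [rr]; done)
      | (refine ⟨1, 2, by decide, Or.inr ?_⟩; simp [rr]; done)
      | (refine ⟨1, 3, by decide, Or.inl ?_⟩; simp [rr]; done)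
      | (refine ⟨1, 3, by decide, Or.inr ?_⟩; simp [rr]; done)
      | (refine ⟨2, 3, by decide, Or.inl ?_⟩; simp [rr]; done)
      | (refine ⟨2, 3, by decide, Or.inr ?_⟩; simp [rr]; done)

/-- The three orthogonal quadruples. -/
def QQ (k : Fin 3) : Set (Fin 4 → ℝ) := Set.range (rr k)

lemma QQ_subset_D4 (k : Fin 3) : QQ k ⊆ D4 := by
  rintro v ⟨a, rfl⟩
  rw [D4_eq]
  exact ⟨k, a, rfl⟩

lemma QQ_finite (k : Fin 3) : (QQ k).Finite := Set.finite_range _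

lemma QQ_disj {k k' : Fin 3} (h : k ≠ k') {v : Fin 4 → ℝ}
    (h1 : v ∈ QQ k) (h2 : v ∈ QQ k') : False := by
  obtain ⟨a, rfl⟩ := h1
  obtain ⟨b, hb⟩ := h2
  exact h (rr_inj hb).1.symm

/-- Any pairwise-orthogonal subset of the roots lies in a single quadruple. -/
lemma orth_subset {q : Set (Fin 4 → ℝ)} (hsub : q ⊆ D4)
    (horth : q.Pairwise (fun x y => dot x y = 0)) {x : Fin 4 → ℝ} (hx : x ∈ q)
    {k : Fin 3} {a : Fin 4} (hxr : x = rr k a) : q ⊆ QQ k := by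
  intro y hy
  have hyD : y ∈ D4 := hsub hy
  rw [D4_eq] at hyD
  obtain ⟨k', b, rfl⟩ := hyD
  by_cases hxy : x = rr k' b
  · rw [← hxy, hxr]; exact ⟨a, rfl⟩
  · have h0 : dot x (rr k' b) = 0 := horth hx hy hxy
    rw [hxr, dot_rr] at h0
    have h0' : dd k a k' b = 0 := by exact_mod_cast h0
    rcases ddz _ _ _ _ h0' with ⟨rfl, _⟩
    exact ⟨b, rfl⟩

lemma compl3 : ∀ a : Fin 4, ∃ b1 b2 b3 : Fin 4, b1 ≠ b2 ∧ b1 ≠ b3 ∧ b2 ≠ b3 ∧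
    ∀ x : Fin 4, x ≠ a ↔ (x = b1 ∨ x = b2 ∨ x = b3) := by decide

lemma QQ_diff_eq (k : Fin 3) (a : Fin 4) :
    ∃ b1 b2 b3 : Fin 4, b1 ≠ b2 ∧ b1 ≠ b3 ∧ b2 ≠ b3 ∧
      QQ k \ {rr k a} = {rr k b1, rr k b2, rr k b3} := by
  obtain ⟨b1, b2, b3, h12, h13, h23, hch⟩ := compl3 a
  refine ⟨b1, b2, b3, h12, h13, h23, ?_⟩
  ext v
  simp only [Set.mem_diff, Set.mem_singleton_iff, Set.mem_insert_iff, QQ, Set.mem_range]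
  constructor
  · rintro ⟨⟨c, rfl⟩, hne⟩
    have hca : c ≠ a := fun h => hne (by rw [h])
    rcases (hch c).mp hca with rfl | rfl | rfl
    · exact Or.inl rfl
    · exact Or.inr (Or.inl rfl)
    · exact Or.inr (Or.inr rfl)
  · rintro (rfl | rfl | rfl)
    · exact ⟨⟨b1, rfl⟩, fun h => ((hch b1).mpr (Or.inl rfl)) (rr_inj h).2⟩
    · exact ⟨⟨b2, rfl⟩, fun h => ((hch b2).mpr (Or.inr (Or.inl rfl))) (rr_inj h).2⟩
    · exact ⟨⟨b3, rfl⟩, fun h => ((hch b3).mpr (Or.inr (Or.inr rfl))) (rr_inj h).2⟩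

lemma rr_ne {k : Fin 3} {a b : Fin 4} (h : a ≠ b) : rr k a ≠ rr k b :=
  fun he => h (rr_inj he).2

lemma ncard_QQ_diff (k : Fin 3) (a : Fin 4) : (QQ k \ {rr k a}).ncard = 3 := by
  obtain ⟨b1, b2, b3, h12, h13, h23, heq⟩ := QQ_diff_eq k a
  rw [heq]
  exact Set.ncard_eq_three.mpr ⟨_, _, _, rr_ne h12, rr_ne h13, rr_ne h23, rfl⟩

lemma isTriple_QQ_diff (k : Fin 3) (a : Fin 4) : IsTriple (QQ k \ {rr k a}) := by
  refine ⟨fun v hv => QQ_subset_D4 k hv.1, ncard_QQ_diff k a, ?_⟩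
  rintro x ⟨⟨c, rfl⟩, _⟩ y ⟨⟨c', rfl⟩, _⟩ hne
  have hcc : c ≠ c' := fun h => hne (by rw [h])
  rw [dot_rr]
  exact_mod_cast dsame k c c' hcc

/-- Classification of triples. -/
lemma triple_struct {t : Set (Fin 4 → ℝ)} (h : IsTriple t) :
    ∃ k a, t = QQ k \ {rr k a} := by
  obtain ⟨hsub, hcard, horth⟩ := h
  obtain ⟨x, y, z, hxy, hxz, hyz, rfl⟩ := Set.ncard_eq_three.mp hcard
  have hxD : x ∈ D4 := hsub (by simp)
  rw [D4_eq] at hxD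
  obtain ⟨k, a1, hx⟩ := hxD
  have hQ : ({x, y, z} : Set (Fin 4 → ℝ)) ⊆ QQ k := orth_subset hsub horth (by simp) hx
  subst hx
  obtain ⟨a2, rfl⟩ := hQ (show y ∈ _ by simp)
  obtain ⟨a3, rfl⟩ := hQ (show z ∈ _ by simp)
  have h12 : a1 ≠ a2 := fun h => hxy (by rw [h])
  have h13 : a1 ≠ a3 := fun h => hxz (by rw [h])
  have h23 : a2 ≠ a3 := fun h => hyz (by rw [h])
  have key : ∀ a1 a2 a3 : Fin 4, a1 ≠ a2 → a1 ≠ a3 → a2 ≠ a3 →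
      ∃ a4, ∀ b : Fin 4, b ≠ a4 ↔ (b = a1 ∨ b = a2 ∨ b = a3) := by decide
  obtain ⟨a4, hch⟩ := key a1 a2 a3 h12 h13 h23
  refine ⟨k, a4, ?_⟩
  ext v
  simp only [Set.mem_insert_iff, Set.mem_singleton_iff, Set.mem_diff, QQ, Set.mem_range]
  constructor
  · rintro (rfl | rfl | rfl)
    · exact ⟨⟨a1, rfl⟩, fun h => ((hch a1).mpr (Or.inl rfl)) (rr_inj h).2⟩
    · exact ⟨⟨a2, rfl⟩, fun h => ((hch a2).mpr (Or.inr (Or.inl rfl))) (rr_inj h).2⟩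
    · exact ⟨⟨a3, rfl⟩, fun h => ((hch a3).mpr (Or.inr (Or.inr rfl))) (rr_inj h).2⟩
  · rintro ⟨⟨c, rfl⟩, hne⟩
    have hca : c ≠ a4 := fun h => hne (by rw [h])
    rcases (hch c).mp hca with rfl | rfl | rfl
    · exact Or.inl rfl
    · exact Or.inr (Or.inl rfl)
    · exact Or.inr (Or.inr rfl)

noncomputable def ff : Fin 4 × Fin 4 × Fin 4 → Set (Fin 4 → ℝ) :=
  fun p => (QQ 0 \ {rr 0 p.1}) ∪ (QQ 1 \ {rr 1 p.2.1}) ∪ (QQ 2 \ {rr 2 p.2.2})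

lemma fin3_cases : ∀ k : Fin 3, k = 0 ∨ k = 1 ∨ k = 2 := by decide

lemma ff_inter (p : Fin 4 × Fin 4 × Fin 4) (k : Fin 3) :
    ∃ a : Fin 4, ff p ∩ QQ k ⊆ QQ k \ {rr k a} := by
  rcases fin3_cases k with rfl | rfl | rfl
  · exact ⟨p.1, by
      rintro v ⟨(h | h) | h, hQ⟩
      · exact h
      · exact absurd hQ (fun hQ' => QQ_disj (by decide) h.1 hQ')
      · exact absurd hQ (fun hQ' => QQ_disj (by decide) h.1 hQ')⟩
  · exact ⟨p.2.1, by
      rintro v ⟨(h | h) | h, hQ⟩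
      · exact absurd hQ (fun hQ' => QQ_disj (by decide) h.1 hQ')
      · exact h
      · exact absurd hQ (fun hQ' => QQ_disj (by decide) h.1 hQ')⟩
  · exact ⟨p.2.2, by
      rintro v ⟨(h | h) | h, hQ⟩
      · exact absurd hQ (fun hQ' => QQ_disj (by decide) h.1 hQ')
      · exact absurd hQ (fun hQ' => QQ_disj (by decide) h.1 hQ')
      · exact h⟩

lemma ff_subset_D4 (p : Fin 4 × Fin 4 × Fin 4) : ff p ⊆ D4 := by
  rintro v ((h | h) | h)
  · exact QQ_subset_D4 0 h.1
  · exact QQ_subset_D4 1 h.1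
  · exact QQ_subset_D4 2 h.1

lemma disj_QQ_diff {k k' : Fin 3} (h : k ≠ k') (a b : Fin 4) :
    Disjoint (QQ k \ {rr k a}) (QQ k' \ {rr k' b}) := by
  rw [Set.disjoint_left]
  rintro v hv hv'
  exact QQ_disj h hv.1 hv'.1

lemma ff_mem_S (p : Fin 4 × Fin 4 × Fin 4) :
    ∃ t₁ t₂ t₃ : Set (Fin 4 → ℝ),
      IsTriple t₁ ∧ IsTriple t₂ ∧ IsTriple t₃ ∧
      Disjoint t₁ t₂ ∧ Disjoint t₁ t₃ ∧ Disjoint t₂ t₃ ∧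
      ff p = t₁ ∪ t₂ ∪ t₃ ∧
      ¬∃ q ⊆ ff p, q.ncard = 4 ∧ q.Pairwise (fun x y => dot x y = 0) := by
  refine ⟨_, _, _, isTriple_QQ_diff 0 p.1, isTriple_QQ_diff 1 p.2.1, isTriple_QQ_diff 2 p.2.2,
    disj_QQ_diff (by decide) _ _, disj_QQ_diff (by decide) _ _, disj_QQ_diff (by decide) _ _,
    rfl, ?_⟩
  rintro ⟨q, hqU, hq4, hqorth⟩
  obtain ⟨x, hx⟩ := Set.nonempty_of_ncard_ne_zero (by omega : q.ncard ≠ 0)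
  have hxD : x ∈ D4 := ff_subset_D4 p (hqU hx)
  rw [D4_eq] at hxD
  obtain ⟨k, a0, hxr⟩ := hxD
  have hqQ : q ⊆ QQ k :=
    orth_subset (fun v hv => ff_subset_D4 p (hqU hv)) hqorth hx hxr
  obtain ⟨a, hsub⟩ := ff_inter p k
  have hq3 : q ⊆ QQ k \ {rr k a} := fun v hv => hsub ⟨hqU hv, hqQ hv⟩
  have hle : q.ncard ≤ 3 := by
    have := Set.ncard_le_ncard hq3 (QQ_finite k).diff
    rwa [ncard_QQ_diff] at this
  omega

lemma mem_QQ_iff {k j : Fin 3} {x : Fin 4} : rr k x ∈ QQ j ↔ k = j := by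
  constructor
  · rintro ⟨b, hb⟩
    exact (rr_inj hb).1.symm
  · rintro rfl
    exact ⟨x, rfl⟩

lemma mem_ff {p : Fin 4 × Fin 4 × Fin 4} {k : Fin 3} {x : Fin 4} :
    rr k x ∈ ff p ↔ (k = 0 ∧ x ≠ p.1) ∨ (k = 1 ∧ x ≠ p.2.1) ∨ (k = 2 ∧ x ≠ p.2.2) := by
  simp only [ff, Set.mem_union, Set.mem_diff, Set.mem_singleton_iff, mem_QQ_iff]
  constructor
  · rintro ((⟨rfl, hne⟩ | ⟨rfl, hne⟩) | ⟨rfl, hne⟩)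
    · exact Or.inl ⟨rfl, fun he => hne (by rw [he])⟩
    · exact Or.inr (Or.inl ⟨rfl, fun he => hne (by rw [he])⟩)
    · exact Or.inr (Or.inr ⟨rfl, fun he => hne (by rw [he])⟩)
  · rintro (⟨rfl, hne⟩ | ⟨rfl, hne⟩ | ⟨rfl, hne⟩)
    · exact Or.inl (Or.inl ⟨rfl, fun he => hne (rr_inj he).2⟩)
    · exact Or.inl (Or.inr ⟨rfl, fun he => hne (rr_inj he).2⟩)
    · exact Or.inr ⟨rfl, fun he => hne (rr_inj he).2⟩

lemma ff_inj : Function.Injective ff := by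
  rintro ⟨a, b, c⟩ ⟨a', b', c'⟩ h
  have h1 : a = a' := by
    by_contra hne
    have hm : rr 0 a' ∈ ff (a, b, c) := mem_ff.mpr (Or.inl ⟨rfl, Ne.symm hne⟩)
    rw [h] at hm
    rcases mem_ff.mp hm with ⟨_, hx⟩ | ⟨h01, _⟩ | ⟨h02, _⟩
    · exact hx rfl
    · exact absurd h01 (by decide)
    · exact absurd h02 (by decide)
  have h2 : b = b' := by
    by_contra hne
    have hm : rr 1 b' ∈ ff (a, b, c) := mem_ff.mpr (Or.inr (Or.inl ⟨rfl, Ne.symm hne⟩))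
    rw [h] at hm
    rcases mem_ff.mp hm with ⟨h01, _⟩ | ⟨_, hx⟩ | ⟨h02, _⟩
    · exact absurd h01 (by decide)
    · exact hx rfl
    · exact absurd h02 (by decide)
  have h3 : c = c' := by
    by_contra hne
    have hm : rr 2 c' ∈ ff (a, b, c) := mem_ff.mpr (Or.inr (Or.inr ⟨rfl, Ne.symm hne⟩))
    rw [h] at hm
    rcases mem_ff.mp hm with ⟨h01, _⟩ | ⟨h02, _⟩ | ⟨_, hx⟩
    · exact absurd h01 (by decide)
    · exact absurd h02 (by decide)
    · exact hx rfl
  rw [h1, h2, h3]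

lemma not_disjoint_same (k : Fin 3) (a a' : Fin 4) :
    ¬ Disjoint (QQ k \ {rr k a}) (QQ k \ {rr k a'}) := by
  have hex : ∀ a a' : Fin 4, ∃ b, b ≠ a ∧ b ≠ a' := by decide
  obtain ⟨b, hb1, hb2⟩ := hex a a'
  intro hd
  exact Set.disjoint_left.mp hd ⟨⟨b, rfl⟩, fun h => hb1 (rr_inj h).2⟩
    ⟨⟨b, rfl⟩, fun h => hb2 (rr_inj h).2⟩

lemma perm012 {t1 t2 t3 : Set (Fin 4 → ℝ)} {a1 a2 a3 : Fin 4}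
    (he1 : t1 = QQ 0 \ {rr 0 a1}) (he2 : t2 = QQ 1 \ {rr 1 a2})
    (he3 : t3 = QQ 2 \ {rr 2 a3}) : ∃ p, ff p = t1 ∪ t2 ∪ t3 := by
  subst he1; subst he2; subst he3
  refine ⟨(a1, a2, a3), ?_⟩
  first
  | rfl
  | (ext v; simp only [ff, Set.mem_union]; tauto)

lemma perm021 {t1 t2 t3 : Set (Fin 4 → ℝ)} {a1 a2 a3 : Fin 4}
    (he1 : t1 = QQ 0 \ {rr 0 a1}) (he2 : t2 = QQ 2 \ {rr 2 a2})
    (he3 : t3 = QQ 1 \ {rr 1 a3}) : ∃ p, ff p = t1 ∪ t2 ∪ t3 := by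
  subst he1; subst he2; subst he3
  refine ⟨(a1, a3, a2), ?_⟩
  first
  | rfl
  | (ext v; simp only [ff, Set.mem_union]; tauto)

lemma perm102 {t1 t2 t3 : Set (Fin 4 → ℝ)} {a1 a2 a3 : Fin 4}
    (he1 : t1 = QQ 1 \ {rr 1 a1}) (he2 : t2 = QQ 0 \ {rr 0 a2})
    (he3 : t3 = QQ 2 \ {rr 2 a3}) : ∃ p, ff p = t1 ∪ t2 ∪ t3 := by
  subst he1; subst he2; subst he3
  refine ⟨(a2, a1, a3), ?_⟩
  first
  | rfl
  | (ext v; simp only [ff, Set.mem_union]; tauto)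

lemma perm120 {t1 t2 t3 : Set (Fin 4 → ℝ)} {a1 a2 a3 : Fin 4}
    (he1 : t1 = QQ 1 \ {rr 1 a1}) (he2 : t2 = QQ 2 \ {rr 2 a2})
    (he3 : t3 = QQ 0 \ {rr 0 a3}) : ∃ p, ff p = t1 ∪ t2 ∪ t3 := by
  subst he1; subst he2; subst he3
  refine ⟨(a3, a1, a2), ?_⟩
  first
  | rfl
  | (ext v; simp only [ff, Set.mem_union]; tauto)

lemma perm201 {t1 t2 t3 : Set (Fin 4 → ℝ)} {a1 a2 a3 : Fin 4}
    (he1 : t1 = QQ 2 \ {rr 2 a1}) (he2 : t2 = QQ 0 \ {rr 0 a2})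
    (he3 : t3 = QQ 1 \ {rr 1 a3}) : ∃ p, ff p = t1 ∪ t2 ∪ t3 := by
  subst he1; subst he2; subst he3
  refine ⟨(a2, a3, a1), ?_⟩
  first
  | rfl
  | (ext v; simp only [ff, Set.mem_union]; tauto)

lemma perm210 {t1 t2 t3 : Set (Fin 4 → ℝ)} {a1 a2 a3 : Fin 4}
    (he1 : t1 = QQ 2 \ {rr 2 a1}) (he2 : t2 = QQ 1 \ {rr 1 a2})
    (he3 : t3 = QQ 0 \ {rr 0 a3}) : ∃ p, ff p = t1 ∪ t2 ∪ t3 := by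
  subst he1; subst he2; subst he3
  refine ⟨(a3, a2, a1), ?_⟩
  first
  | rfl
  | (ext v; simp only [ff, Set.mem_union]; tauto)

set_option maxHeartbeats 2000000 in
/-- There are exactly 64 sets which are unions of three pairwise disjoint triples of
mutually orthogonal positive roots of `D_4` containing no quadruple of mutually
orthogonal roots. -/
theorem count_maximal_quadruple_free_sets :
    {U : Set (Fin 4 → ℝ) | ∃ t₁ t₂ t₃ : Set (Fin 4 → ℝ),
        IsTriple t₁ ∧ IsTriple t₂ ∧ IsTriple t₃ ∧
        Disjoint t₁ t₂ ∧ Disjoint t₁ t₃ ∧ Disjoint t₂ t₃ ∧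
        U = t₁ ∪ t₂ ∪ t₃ ∧
        ¬∃ q ⊆ U, q.ncard = 4 ∧ q.Pairwise (fun x y => dot x y = 0)}.ncard
      = 64 := by
  have hS : {U : Set (Fin 4 → ℝ) | ∃ t₁ t₂ t₃ : Set (Fin 4 → ℝ),
        IsTriple t₁ ∧ IsTriple t₂ ∧ IsTriple t₃ ∧
        Disjoint t₁ t₂ ∧ Disjoint t₁ t₃ ∧ Disjoint t₂ t₃ ∧
        U = t₁ ∪ t₂ ∪ t₃ ∧
        ¬∃ q ⊆ U, q.ncard = 4 ∧ q.Pairwise (fun x y => dot x y = 0)}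
      = Set.range ff := by
    ext U
    simp only [Set.mem_setOf_eq, Set.mem_range]
    constructor
    · rintro ⟨t1, t2, t3, ht1, ht2, ht3, h12, h13, h23, rfl, -⟩
      obtain ⟨k1, a1, he1⟩ := triple_struct ht1
      obtain ⟨k2, a2, he2⟩ := triple_struct ht2
      obtain ⟨k3, a3, he3⟩ := triple_struct ht3
      have hk12 : k1 ≠ k2 := by
        rintro rfl
        rw [he1, he2] at h12
        exact not_disjoint_same _ _ _ h12
      have hk13 : k1 ≠ k3 := by
        rintro rfl
        rw [he1, he3] at h13
        exact not_disjoint_same _ _ _ h13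
      have hk23 : k2 ≠ k3 := by
        rintro rfl
        rw [he2, he3] at h23
        exact not_disjoint_same _ _ _ h23
      rcases fin3_cases k1 with rfl | rfl | rfl <;>
        rcases fin3_cases k2 with rfl | rfl | rfl <;>
        rcases fin3_cases k3 with rfl | rfl | rfl <;>
        first
        | exact absurd rfl hk12
        | exact absurd rfl hk13
        | exact absurd rfl hk23
        | exact perm012 he1 he2 he3
        | exact perm021 he1 he2 he3
        | exact perm102 he1 he2 he3
        | exact perm120 he1 he2 he3
        | exact perm201 he1 he2 he3
        | exact perm210 he1 he2 he3
    · rintro ⟨p, rfl⟩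
      exact ff_mem_S p
  rw [hS, ← Set.image_univ, Set.ncard_image_of_injective _ ff_inj, Set.ncard_univ]
  simp [Nat.card_eq_fintype_card]
end
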